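/- arXiv:1903.06886 — 2 statements merged into one kernel-verified Lean document; each statement's English description precedes it below -/
import Mathlib

section
/- Let 0 < p, q < 1 and 0 ≤ φ_P, φ_S < 1, and suppose u, v satisfy u = (1-φ_S) + φ_S(1-p)(1-q)u + φ_S·p(1-q)v and v = (1-φ_P)(1-p)(1-q)u + (φ_P + (1-φ_P)p)(1-q)v. Then v = (1-φ_P) / ( q/((1-φ_S)(1-p)(1-q)) + 1 - φ_P - qφ_Pφ_S/(1-φ_S) ). -/
/-!
The two balance equations form a linear system in `u` and `v`. With `a = (1 - p)(1 - q)`, its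
determinant simplifies to `q (1 - a φP φS) + a (1 - φP)(1 - φS)`, which is positive since
`0 < a ≤ 1` and `φP φS < 1`; Cramer's rule then gives
`v = (1 - φP)(1 - φS) a / (q (1 - a φP φS) + a (1 - φP)(1 - φS))`, which is the claimed
expression with numerator and denominator divided by `(1 - φS) a`.
-/

/-- The determinant of the linear system for `(u, v)`, where `a = (1 - p)(1 - q)`. -/
def overlayDet (q a φP φS : ℝ) : ℝ :=
  q * (1 - a * φP * φS) + a * (1 - φP) * (1 - φS)

theorem overlayDet_pos {q a φP φS : ℝ} (hq : 0 ≤ q) (ha0 : 0 < a) (ha1 : a ≤ 1)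
    (hφP0 : 0 ≤ φP) (hφP1 : φP < 1) (hφS0 : 0 ≤ φS) (hφS1 : φS < 1) :
    0 < overlayDet q a φP φS := by
  have hφ : φP * φS < 1 := mul_lt_one_of_nonneg_of_lt_one_left hφP0 hφP1 hφS1.le
  have haφ : a * φP * φS < 1 := by
    rw [mul_assoc]
    calc a * (φP * φS) ≤ φP * φS := mul_le_of_le_one_left (by positivity) ha1
      _ < 1 := hφ
  have hqterm : 0 ≤ q * (1 - a * φP * φS) := mul_nonneg hq (sub_nonneg.mpr haφ.le)
  have haterm : 0 < a * (1 - φP) * (1 - φS) :=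
    mul_pos (mul_pos ha0 (sub_pos.mpr hφP1)) (sub_pos.mpr hφS1)
  exact add_pos_of_nonneg_of_pos hqterm haterm

theorem mul_overlayDet_eq {p q φP φS u v : ℝ}
    (hu : u = (1 - φS) + φS * (1 - p) * (1 - q) * u + φS * p * (1 - q) * v)
    (hv : v = (1 - φP) * (1 - p) * (1 - q) * u + (φP + (1 - φP) * p) * (1 - q) * v) :
    v * overlayDet q ((1 - p) * (1 - q)) φP φS = (1 - φP) * (1 - φS) * ((1 - p) * (1 - q)) := by
  unfold overlayDet
  linear_combination ((1 - φP) * (1 - p) * (1 - q)) * hu + (1 - φS * (1 - p) * (1 - q)) * hv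

theorem overlayDet_div_eq {q a φP φS : ℝ} (ha : a ≠ 0) (hφS : φS ≠ 1) :
    overlayDet q a φP φS / ((1 - φS) * a) =
      q / ((1 - φS) * a) + 1 - φP - q * φP * φS / (1 - φS) := by
  have : 1 - φS ≠ 0 := sub_ne_zero.mpr hφS.symm
  unfold overlayDet
  field_simp
  ring

/-- Solution for v = P(Φ | generated in busy slot) from the recursive system in
the overlay scheme. -/
theorem prob_success_busy_slot (p q φP φS u v : ℝ) (hp0 : 0 < p) (hp1 : p < 1)
    (hq0 : 0 < q) (hq1 : q < 1) (hφP0 : 0 ≤ φP) (hφP1 : φP < 1)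
    (hφS0 : 0 ≤ φS) (hφS1 : φS < 1)
    (hu : u = (1 - φS) + φS * (1 - p) * (1 - q) * u + φS * p * (1 - q) * v)
    (hv : v = (1 - φP) * (1 - p) * (1 - q) * u + (φP + (1 - φP) * p) * (1 - q) * v) :
    v = (1 - φP) /
        (q / ((1 - φS) * (1 - p) * (1 - q)) + 1 - φP - q * φP * φS / (1 - φS)) := by
  set a := (1 - p) * (1 - q)
  have ha0 : 0 < a := mul_pos (sub_pos.mpr hp1) (sub_pos.mpr hq1)
  have ha1 : a ≤ 1 := mul_le_one₀ (by linarith) (by linarith) (by linarith)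
  have hdet := overlayDet_pos hq0.le ha0 ha1 hφP0 hφP1 hφS0 hφS1
  rw [mul_assoc (1 - φS), ← overlayDet_div_eq ha0.ne' hφS1.ne, div_div_eq_mul_div,
    eq_div_iff hdet.ne']
  linear_combination mul_overlayDet_eq hu hv
end

section
/- Let X, Y be independent exponential random variables with means Ω₁ and Ω₂ respectively, and let c, σ, N₀, P_p > 0. Then P( X < σ(c·min(Y, t) + N₀)/P_p ), where Y is truncated at t = I_C/P_s (i.e., the interference is min(P_s·Y, I_C)), equals 1 - [ exp(-I_C/(P_s Ω₂) - (I_C+N₀)σ/(P_p Ω₁)) + exp(-N₀σ/(P_p Ω₁))/(P_s Ω₂ σ / (P_p Ω₁)) ] / (1 + P_p Ω₁/(P_s Ω₂ σ)). -/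
/-!
Write `r = 1/Ω₂`, `s = σ P_s/(P_p Ω₁)`, `k = σ N₀/(P_p Ω₁)` and `t = I_C/P_s`. Then `Y` has
density `r e^{-r y}` and, given `Y = y`, the outage probability is `1 - e^{-(s min(y, t) + k)}`.
Below the cap the integrand is a difference of two exponentials, integrated in closed form; above
it the integrand is constant, contributing the exponential tail `e^{-r t}`. The two `e^{-r t}`
terms cancel, leaving `1 - (r e^{-k} + s e^{-((r+s) t + k)})/(r + s)`.
-/

open MeasureTheory Real Set

theorem integral_exp_mul {c : ℝ} (hc : c ≠ 0) (a b : ℝ) :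
    ∫ x in a..b, exp (c * x) = (exp (c * b) - exp (c * a)) / c := by
  rw [intervalIntegral.integral_comp_mul_left (fun x => exp x) hc, integral_exp, smul_eq_mul,
    inv_mul_eq_div]

lemma integral_Ioi_exp_density {r : ℝ} (hr : 0 < r) (t : ℝ) :
    ∫ y in Ioi t, r * exp (-r * y) = exp (-r * t) := by
  rw [integral_const_mul, integral_exp_mul_Ioi (neg_neg_of_pos hr)]
  field_simp

lemma integral_Ioc_exp_density_mul_one_sub_exp {r s t : ℝ} (k : ℝ) (hr : r ≠ 0)
    (hrs : r + s ≠ 0) (ht : 0 ≤ t) :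
    ∫ y in Ioc 0 t, r * exp (-r * y) * (1 - exp (-(s * y + k)))
      = 1 - exp (-r * t) - r * exp (-k) * (1 - exp (-(r + s) * t)) / (r + s) := by
  have hsplit : ∀ y, r * exp (-r * y) * (1 - exp (-(s * y + k)))
      = r * exp (-r * y) - r * exp (-k) * exp (-(r + s) * y) := fun y => by
    rw [mul_one_sub, mul_assoc r, ← exp_add, mul_assoc r, ← exp_add]
    ring_nf
  simp_rw [← intervalIntegral.integral_of_le ht, hsplit]
  rw [intervalIntegral.integral_sub ((by fun_prop : Continuous _).intervalIntegrable _ _)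
      ((by fun_prop : Continuous _).intervalIntegrable _ _),
    intervalIntegral.integral_const_mul, intervalIntegral.integral_const_mul,
    integral_exp_mul (neg_ne_zero.mpr hr),
    integral_exp_mul (neg_ne_zero.mpr hrs)]
  simp only [mul_zero, exp_zero]
  field_simp
  ring

theorem integral_exp_density_mul_one_sub_exp_truncated {r s t : ℝ} (k : ℝ) (hr : 0 < r)
    (hrs : r + s ≠ 0) (ht : 0 ≤ t) :
    (∫ y in Ioc 0 t, r * exp (-r * y) * (1 - exp (-(s * y + k)))) +
      ∫ y in Ioi t, r * exp (-r * y) * (1 - exp (-(s * t + k)))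
      = 1 - (r * exp (-k) + s * exp (-((r + s) * t + k))) / (r + s) := by
  rw [integral_Ioc_exp_density_mul_one_sub_exp k hr.ne' hrs ht, integral_mul_const,
    integral_Ioi_exp_density hr]
  have hsum : exp (-((r + s) * t + k)) = exp (-r * t) * exp (-(s * t + k)) := by
    rw [← exp_add]; ring_nf
  have hexp_rs : exp (-(r + s) * t) = exp (-r * t) * exp (-s * t) := by
    rw [← exp_add]; ring_nf
  have hshift : exp (-(s * t + k)) = exp (-s * t) * exp (-k) := by
    rw [← exp_add]; ring_nf
  rw [hsum, hexp_rs, hshift]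
  field_simp
  ring

theorem underlay_primary_outage_with_interference_general
    (Ω₁ Ω₂ σ N₀ Pp Ps IC : ℝ) (hΩ₁ : 0 < Ω₁) (hΩ₂ : 0 < Ω₂) (hσ : 0 < σ)
    (hPp : 0 < Pp) (hPs : 0 < Ps) (hIC : 0 < IC) :
    (∫ y in Set.Ioc 0 (IC / Ps),
        (Real.exp (-y / Ω₂) / Ω₂) * (1 - Real.exp (-(σ * (Ps * y + N₀)) / (Pp * Ω₁)))) +
    (∫ y in Set.Ioi (IC / Ps),
        (Real.exp (-y / Ω₂) / Ω₂) * (1 - Real.exp (-(σ * (IC + N₀)) / (Pp * Ω₁))))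
    = 1 - (Real.exp (-(IC / (Ps * Ω₂)) - (IC + N₀) * σ / (Pp * Ω₁))
          + Real.exp (-(N₀ * σ) / (Pp * Ω₁)) / (Ps * Ω₂ * σ / (Pp * Ω₁)))
        / (1 + Pp * Ω₁ / (Ps * Ω₂ * σ)) := by
  set r := Ω₂⁻¹
  set s := σ * Ps / (Pp * Ω₁)
  set k := σ * N₀ / (Pp * Ω₁)
  set t := IC / Ps
  have hdensity : ∀ y, exp (-y / Ω₂) / Ω₂ = r * exp (-r * y) := fun y => by
    rw [neg_div, div_eq_inv_mul, div_eq_inv_mul, neg_mul]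
  have hthreshold : ∀ y, -(σ * (Ps * y + N₀)) / (Pp * Ω₁) = -(s * y + k) := fun y => by
    simp only [s, k]; field_simp
  have hthreshold_cap : -(σ * (IC + N₀)) / (Pp * Ω₁) = -(s * t + k) := by
    simp only [s, k, t]; field_simp
  simp only [hdensity, hthreshold, hthreshold_cap]
  rw [integral_exp_density_mul_one_sub_exp_truncated k (by positivity) (by positivity)
    (by positivity)]
  have hexp_cap : -(IC / (Ps * Ω₂)) - (IC + N₀) * σ / (Pp * Ω₁) = -((r + s) * t + k) := by
    simp only [r, s, k, t]; field_simp; ring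
  have hexp_noise : -(N₀ * σ) / (Pp * Ω₁) = -k := by
    simp only [k]; ring
  rw [hexp_cap, hexp_noise]
  generalize exp (-((r + s) * t + k)) = A
  generalize exp (-k) = B
  simp only [r, s]
  field_simp
  ring

/-- The underlay outage probability of the primary link with capped
interference, expressed as the sum of two integrals (exponential channel gains
X ~ Exp(mean Ω₁), Y ~ Exp(mean Ω₂)), equals the closed form. -/
theorem underlay_primary_outage_with_interference
    (Ω₁ Ω₂ σ N₀ Pp Ps IC : ℝ) (hΩ₁ : 0 < Ω₁) (hΩ₂ : 0 < Ω₂) (hσ : 0 < σ)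
    (hN₀ : 0 < N₀) (hPp : 0 < Pp) (hPs : 0 < Ps) (hIC : 0 < IC) :
    (∫ y in Set.Ioc 0 (IC / Ps),
        (Real.exp (-y / Ω₂) / Ω₂) * (1 - Real.exp (-(σ * (Ps * y + N₀)) / (Pp * Ω₁)))) +
    (∫ y in Set.Ioi (IC / Ps),
        (Real.exp (-y / Ω₂) / Ω₂) * (1 - Real.exp (-(σ * (IC + N₀)) / (Pp * Ω₁))))
    = 1 - (Real.exp (-(IC / (Ps * Ω₂)) - (IC + N₀) * σ / (Pp * Ω₁))
          + Real.exp (-(N₀ * σ) / (Pp * Ω₁)) / (Ps * Ω₂ * σ / (Pp * Ω₁)))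
        / (1 + Pp * Ω₁ / (Ps * Ω₂ * σ)) :=
  underlay_primary_outage_with_interference_general Ω₁ Ω₂ σ N₀ Pp Ps IC hΩ₁ hΩ₂ hσ hPp hPs hIC
end
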